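/- In the IT token-passing simulator, in every reachable configuration at most one token exists in the system, and a token exists if and only if some agent has role 'pending' and the token has not yet been consumed. -/
import Mathlib


/-- Roles of the token-passing simulator for the IT model. -/
inductive Role | leader | available | moving | starter | pending
deriving DecidableEq

/-- Local state of a simulating agent: a role, a simulated state of the two-way
protocol, and an optional token. -/
structure AState (Qp : Type*) where
  role : Role
  sim : Qp
  token : Option Qp

/-- New state of the starter of an interaction: it erases its token; a leader or a
moving agent becomes available, a starter becomes pending. -/
def starterNew {Qp : Type*} (x : AState Qp) : AState Qp :=
  { role := match x.role with
      | Role.leader => Role.available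
      | Role.moving => Role.available
      | Role.starter => Role.pending
      | ρ => ρ
    sim := x.sim
    token := none }

/-- New state of the reactor, reading the starter's (pre-interaction) state `xs`:
it copies the starter's token; if the starter is the leader it becomes moving; if the
starter is moving it becomes starter; if the starter is a starter it applies `fr` and
creates the token; if it is pending and receives the token it applies `fs` and becomes
the new leader. -/
def reactorNew {Qp : Type*} [DecidableEq Qp] (fs fr : Qp → Qp → Qp)
    (xs xr : AState Qp) : AState Qp :=
  match xs.role with
  | Role.leader => { role := Role.moving, sim := xr.sim, token := xs.token }
  | Role.moving => { role := Role.starter, sim := xr.sim, token := xs.token }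
  | Role.starter => { role := xr.role, sim := fr xs.sim xr.sim, token := some xr.sim }
  | _ =>
    if xr.role = Role.pending then
      match xs.token with
      | some v => { role := Role.leader, sim := fs xr.sim v, token := none }
      | none => { role := xr.role, sim := xr.sim, token := none }
    else { role := xr.role, sim := xr.sim, token := xs.token }

/-- One interaction step of the token-passing simulator. -/
def SimStep {Qp : Type*} [DecidableEq Qp] (fs fr : Qp → Qp → Qp) {n : ℕ}
    (cfg cfg' : Fin n → AState Qp) : Prop :=
  ∃ s r : Fin n, s ≠ r ∧
    cfg' = Function.update (Function.update cfg s (starterNew (cfg s))) r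
      (reactorNew fs fr (cfg s) (cfg r))

def TokInv {Qp : Type*} {n : ℕ} (cfg : Fin n → AState Qp) : Prop :=
  ∃ x : Fin n, (cfg x).role ≠ Role.available ∧
    (∀ b, b ≠ x → (cfg b).role = Role.available) ∧
    (∀ a b, ((cfg a).token).isSome → ((cfg b).token).isSome → a = b) ∧
    (∀ a, ((cfg a).token).isSome → (cfg x).role = Role.pending)

lemma tokInv_step {Qp : Type*} [DecidableEq Qp] (fs fr : Qp → Qp → Qp) {n : ℕ}
    {cfg cfg' : Fin n → AState Qp} (h : SimStep fs fr cfg cfg') (hI : TokInv cfg) :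
    TokInv cfg' := by
  obtain ⟨s, r, hsr, rfl⟩ := h
  obtain ⟨x, hx, hav, huniq, hpend⟩ := hI
  set c' := Function.update (Function.update cfg s (starterNew (cfg s))) r
      (reactorNew fs fr (cfg s) (cfg r)) with hc'
  have hcr : c' r = reactorNew fs fr (cfg s) (cfg r) := Function.update_self _ _ _
  have hcs : c' s = starterNew (cfg s) := by
    rw [hc', Function.update_of_ne hsr, Function.update_self]
  have hco : ∀ b, b ≠ s → b ≠ r → c' b = cfg b := fun b hbs hbr => by
    rw [hc', Function.update_of_ne hbr, Function.update_of_ne hbs]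
  cases hrole : (cfg s).role with
  | leader =>
    have hxs : s = x := by
      by_contra h
      rw [hav s h] at hrole; exact Role.noConfusion hrole
    have hnotok : ∀ a, (cfg a).token = none := by
      intro a
      by_contra ha
      have := hpend a (Option.ne_none_iff_isSome.mp ha)
      rw [← hxs, hrole] at this; exact Role.noConfusion this
    have htok' : ∀ a, (c' a).token = none := by
      intro a
      rcases eq_or_ne a r with rfl | har
      · rw [hcr]; simp [reactorNew, hrole, hnotok]
      rcases eq_or_ne a s with rfl | has
      · rw [hcs]; simp [starterNew]
      · rw [hco a has har]; exact hnotok a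
    refine ⟨r, ?_, ?_, ?_, ?_⟩
    · rw [hcr]; simp [reactorNew, hrole]
    · intro b hbr
      rcases eq_or_ne b s with rfl | hbs
      · rw [hcs]; simp [starterNew, hrole]
      · rw [hco b hbs hbr]; exact hav b (hxs ▸ hbs)
    · intro a b ha _; exact absurd ha (by simp [htok' a])
    · intro a ha; exact absurd ha (by simp [htok' a])
  | moving =>
    have hxs : s = x := by
      by_contra h
      rw [hav s h] at hrole; exact Role.noConfusion hrole
    have hnotok : ∀ a, (cfg a).token = none := by
      intro a
      by_contra ha
      have := hpend a (Option.ne_none_iff_isSome.mp ha)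
      rw [← hxs, hrole] at this; exact Role.noConfusion this
    have htok' : ∀ a, (c' a).token = none := by
      intro a
      rcases eq_or_ne a r with rfl | har
      · rw [hcr]; simp [reactorNew, hrole, hnotok]
      rcases eq_or_ne a s with rfl | has
      · rw [hcs]; simp [starterNew]
      · rw [hco a has har]; exact hnotok a
    refine ⟨r, ?_, ?_, ?_, ?_⟩
    · rw [hcr]; simp [reactorNew, hrole]
    · intro b hbr
      rcases eq_or_ne b s with rfl | hbs
      · rw [hcs]; simp [starterNew, hrole]
      · rw [hco b hbs hbr]; exact hav b (hxs ▸ hbs)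
    · intro a b ha _; exact absurd ha (by simp [htok' a])
    · intro a ha; exact absurd ha (by simp [htok' a])
  | starter =>
    have hxs : s = x := by
      by_contra h
      rw [hav s h] at hrole; exact Role.noConfusion hrole
    have hnotok : ∀ a, (cfg a).token = none := by
      intro a
      by_contra ha
      have := hpend a (Option.ne_none_iff_isSome.mp ha)
      rw [← hxs, hrole] at this; exact Role.noConfusion this
    have htok' : ∀ a, a ≠ r → (c' a).token = none := by
      intro a har
      rcases eq_or_ne a s with rfl | has
      · rw [hcs]; simp [starterNew]
      · rw [hco a has har]; exact hnotok a
    refine ⟨s, ?_, ?_, ?_, ?_⟩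
    · rw [hcs]; simp [starterNew, hrole]
    · intro b hbs
      rcases eq_or_ne b r with hbr | hbr
      · rw [hbr, hcr]; simp [reactorNew, hrole]
        exact hav r (by rw [← hxs]; exact hsr.symm)
      · rw [hco b hbs hbr]; exact hav b (hxs ▸ hbs)
    · intro p q hp hq
      have hpr : p = r := by
        by_contra h; rw [htok' p h] at hp; simp at hp
      have hqr : q = r := by
        by_contra h; rw [htok' q h] at hq; simp at hq
      rw [hpr, hqr]
    · intro a _
      rw [hcs]; simp [starterNew, hrole]
  | pending =>
    have hxs : s = x := by
      by_contra h
      rw [hav s h] at hrole; exact Role.noConfusion hrole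
    have hrr : (cfg r).role = Role.available := hav r (by rw [← hxs]; exact hsr.symm)
    have hrne : (cfg r).role ≠ Role.pending := by rw [hrr]; exact fun h => Role.noConfusion h
    have hcr2 : c' r = { role := (cfg r).role, sim := (cfg r).sim, token := (cfg s).token } := by
      rw [hcr]; simp [reactorNew, hrole, hrne]
    refine ⟨s, ?_, ?_, ?_, ?_⟩
    · rw [hcs]; simp [starterNew, hrole]
    · intro b hbs
      rcases eq_or_ne b r with rfl | hbr
      · rw [hcr2]; exact hrr
      · rw [hco b hbs hbr]; exact hav b (hxs ▸ hbs)
    · intro p q hp hq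
      have key : ∀ a, a ≠ s → a ≠ r → ((c' a).token).isSome → ((cfg a).token).isSome := by
        intro a has har ha; rwa [hco a has har] at ha
      have hks : ∀ a, ((c' a).token).isSome → a ≠ s := by
        intro a ha h; rw [h, hcs] at ha; simp [starterNew] at ha
      have hkr : ((c' r).token).isSome → ((cfg s).token).isSome := by
        intro h; rwa [hcr2] at h
      by_cases hpr : p = r
      · by_cases hqr : q = r
        · rw [hpr, hqr]
        · have := huniq s q (hkr (hpr ▸ hp)) (key q (hks q hq) hqr hq)
          exact absurd this.symm (hks q hq)
      · by_cases hqr : q = r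
        · have := huniq p s (key p (hks p hp) hpr hp) (hkr (hqr ▸ hq))
          exact absurd this (hks p hp)
        · exact huniq p q (key p (hks p hp) hpr hp) (key q (hks q hq) hqr hq)
    · intro a _
      rw [hcs]; simp [starterNew, hrole]
  | available =>
    have hsx : s ≠ x := by
      intro h; rw [← h] at hx; exact hx hrole
    by_cases hrp : (cfg r).role = Role.pending
    · have hrx : r = x := by
        by_contra h
        rw [hav r h] at hrp; exact Role.noConfusion hrp
      cases hts : (cfg s).token with
      | some v =>
        have hcr2 : c' r = { role := Role.leader, sim := fs (cfg r).sim v, token := none } := by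
          rw [hcr]; simp [reactorNew, hrole, hrp, hts]
        have htok' : ∀ a, (c' a).token = none := by
          intro a
          rcases eq_or_ne a r with rfl | har
          · rw [hcr2]
          rcases eq_or_ne a s with rfl | has
          · rw [hcs]; simp [starterNew]
          · rw [hco a has har]
            by_contra hne
            exact has (huniq a s (Option.ne_none_iff_isSome.mp hne) (by simp [hts]))
        refine ⟨r, ?_, ?_, ?_, ?_⟩
        · rw [hcr2]; exact fun h => Role.noConfusion h
        · intro b hbr
          rcases eq_or_ne b s with rfl | hbs
          · rw [hcs]; simp [starterNew, hrole]
          · rw [hco b hbs hbr]; exact hav b (hrx ▸ hbr)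
        · intro a b ha _; exact absurd ha (by simp [htok' a])
        · intro a ha; exact absurd ha (by simp [htok' a])
      | none =>
        have hcr2 : c' r = { role := (cfg r).role, sim := (cfg r).sim, token := none } := by
          rw [hcr]; simp [reactorNew, hrole, hrp, hts]
        refine ⟨r, ?_, ?_, ?_, ?_⟩
        · rw [hcr2]; simp; rw [hrp]; exact fun h => Role.noConfusion h
        · intro b hbr
          rcases eq_or_ne b s with rfl | hbs
          · rw [hcs]; simp [starterNew, hrole]
          · rw [hco b hbs hbr]; exact hav b (hrx ▸ hbr)
        · intro a b ha hb
          have key : ∀ a, ((c' a).token).isSome → a ≠ s ∧ a ≠ r ∧ ((cfg a).token).isSome := by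
            intro a ha
            have has : a ≠ s := by
              intro h; rw [h, hcs] at ha; simp [starterNew] at ha
            have har : a ≠ r := by
              intro h; rw [h, hcr2] at ha; simp at ha
            exact ⟨has, har, by rwa [hco a has har] at ha⟩
          obtain ⟨_, _, ha'⟩ := key a ha
          obtain ⟨_, _, hb'⟩ := key b hb
          exact huniq a b ha' hb'
        · intro a ha
          rw [hcr2]; simpa using hrp
    · have hcr2 : c' r = { role := (cfg r).role, sim := (cfg r).sim, token := (cfg s).token } := by
        rw [hcr]; simp [reactorNew, hrole, hrp]
      have hxr' : (c' x).role = (cfg x).role := by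
        rcases eq_or_ne x r with rfl | hxr
        · rw [hcr2]
        · rw [hco x (Ne.symm hsx) hxr]
      refine ⟨x, ?_, ?_, ?_, ?_⟩
      · rw [hxr']; exact hx
      · intro b hbx
        rcases eq_or_ne b r with hbr | hbr
        · rw [hbr, hcr2]; exact hav r (hbr ▸ hbx)
        rcases eq_or_ne b s with rfl | hbs
        · rw [hcs]; simp [starterNew, hrole]
        · rw [hco b hbs hbr]; exact hav b hbx
      · intro p q hp hq
        have key : ∀ a, a ≠ s → a ≠ r → ((c' a).token).isSome → ((cfg a).token).isSome := by
          intro a has har ha; rwa [hco a has har] at ha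
        have hks : ∀ a, ((c' a).token).isSome → a ≠ s := by
          intro a ha h; rw [h, hcs] at ha; simp [starterNew] at ha
        have hkr : ((c' r).token).isSome → ((cfg s).token).isSome := by
          intro h; rwa [hcr2] at h
        by_cases hpr : p = r
        · by_cases hqr : q = r
          · rw [hpr, hqr]
          · have := huniq s q (hkr (hpr ▸ hp)) (key q (hks q hq) hqr hq)
            exact absurd this.symm (hks q hq)
        · by_cases hqr : q = r
          · have := huniq p s (key p (hks p hp) hpr hp) (hkr (hqr ▸ hq))
            exact absurd this (hks p hp)
          · exact huniq p q (key p (hks p hp) hpr hp) (key q (hks q hq) hqr hq)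
      · intro a ha
        rw [hxr']
        rcases eq_or_ne a r with rfl | har
        · rw [hcr2] at ha; exact hpend s ha
        · have has : a ≠ s := by
            rintro rfl; rw [hcs] at ha; simp [starterNew] at ha
          rw [hco a has har] at ha
          exact hpend a ha

/-- Token invariant of the simulator: in every reachable configuration at most one
agent holds a token, and if some agent holds a token then exactly one agent has role
pending. -/
theorem stmt19 {Qp : Type*} [DecidableEq Qp] (fs fr : Qp → Qp → Qp)
    (n : ℕ) (hn : 2 < n) (init cfg : Fin n → AState Qp)
    (hinit : (∃ a, (init a).role = Role.leader ∧
        ∀ b, b ≠ a → (init b).role = Role.available) ∧ ∀ a, (init a).token = none)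
    (hreach : Relation.ReflTransGen (SimStep fs fr) init cfg) :
    (Finset.univ.filter (fun a => ((cfg a).token).isSome)).card ≤ 1 ∧
    ((Finset.univ.filter (fun a => ((cfg a).token).isSome)).card = 1 →
      (Finset.univ.filter (fun a => (cfg a).role = Role.pending)).card = 1) := by
  have hInv : TokInv cfg := by
    induction hreach with
    | refl =>
      obtain ⟨⟨a, hal, hav⟩, htok⟩ := hinit
      refine ⟨a, by rw [hal]; exact fun h => Role.noConfusion h, hav, ?_, ?_⟩
      · intro p q hp _; rw [htok p] at hp; simp at hp
      · intro p hp; rw [htok p] at hp; simp at hp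
    | tail _ hstep ih => exact tokInv_step fs fr hstep ih
  obtain ⟨x, hx, hav, huniq, hpend⟩ := hInv
  constructor
  · rw [Finset.card_le_one]
    intro p hp q hq
    rw [Finset.mem_filter] at hp hq
    exact huniq p q hp.2 hq.2
  · intro h1
    obtain ⟨a, ha⟩ := Finset.card_eq_one.mp h1
    have hta : ((cfg a).token).isSome := by
      have : a ∈ Finset.univ.filter (fun a => ((cfg a).token).isSome) := by
        rw [ha]; exact Finset.mem_singleton_self a
      exact (Finset.mem_filter.mp this).2
    have hxp := hpend a hta
    rw [Finset.card_eq_one]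
    refine ⟨x, ?_⟩
    ext b
    simp only [Finset.mem_filter, Finset.mem_univ, true_and, Finset.mem_singleton]
    constructor
    · intro hb
      by_contra hbx
      rw [hav b hbx] at hb
      exact Role.noConfusion hb
    · rintro rfl; exact hxp
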